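/- arXiv:2501.17124 — 4 statements merged into one kernel-verified Lean document; each statement's English description precedes it below -/
import Mathlib

section
/- The square Cauchy–Vandermonde matrix is invertible: let F be a field, let L and m be natural numbers with N = L + m, and let f_1, …, f_L, α_1, …, α_N ∈ F be N + L pairwise distinct elements of F. Then the N × N matrix M whose entry in row n and column ℓ is (f_ℓ − α_n)⁻¹ for 1 ≤ ℓ ≤ L, and whose entry in row n and column L + k is α_n^{k−1} for 1 ≤ k ≤ m, is invertible (equivalently, its determinant is nonzero). -/
/-!
A kernel vector `(c, d)` of the matrix says that `∑ ℓ, c ℓ / (f ℓ - x) + Q x` vanishes at the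
`L + m` points `α n`, where `Q = ∑ k, d k X ^ k` has degree `< m`. Multiplying by the nodal
polynomial `∏ ℓ, (X - f ℓ)` turns this, by the barycentric formula, into the polynomial
`interpolate + Q * nodal` of degree `< L + m`, which therefore vanishes. Its values at the nodes
`f ℓ` are the interpolated values, nonzero multiples of `c ℓ`, so `c = 0`; then `Q * nodal = 0`
gives `Q = 0`.
-/

open Polynomial Finset
open scoped Matrix

namespace Lagrange

variable {F ι : Type*} [Field F] [DecidableEq ι] {s : Finset ι} {v : ι → F}

theorem eval_interpolate_add_mul_nodal (r : ι → F) (Q : F[X]) {x : F} (hx : ∀ i ∈ s, x ≠ v i) :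
    eval x (interpolate s v r + Q * nodal s v) =
      eval x (nodal s v) * (∑ i ∈ s, nodalWeight s v i * (x - v i)⁻¹ * r i + eval x Q) := by
  rw [eval_add, eval_mul, eval_interpolate_not_at_node r hx]
  ring

theorem degree_interpolate_add_mul_nodal_lt (hv : Set.InjOn v s) (r : ι → F) {Q : F[X]} {m : ℕ}
    (hQ : Q.degree < m) : (interpolate s v r + Q * nodal s v).degree < ↑(#s + m) := by
  refine (degree_add_le _ _).trans_lt (max_lt ?_ ?_)
  · exact (degree_interpolate_lt r hv).trans_le (by exact_mod_cast Nat.le_add_right _ _)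
  · rw [degree_mul, degree_nodal, add_comm #s, Nat.cast_add]
    exact WithBot.add_lt_add_right (WithBot.natCast_ne_bot _) hQ

theorem interpolate_add_mul_nodal_eq_zero_iff (hv : Set.InjOn v s) {r : ι → F} {Q : F[X]} :
    interpolate s v r + Q * nodal s v = 0 ↔ (∀ i ∈ s, r i = 0) ∧ Q = 0 := by
  refine ⟨fun h => ?_, fun ⟨hr, hQ⟩ => ?_⟩
  · have hr : ∀ i ∈ s, r i = 0 := fun i hi => by
      have := congr_arg (eval (v i)) h
      rwa [eval_add, eval_mul, eval_interpolate_at_node r hv hi, eval_nodal_at_node hi, mul_zero,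
        add_zero, eval_zero] at this
    rw [interpolate_eq_of_values_eq_on r 0 hr, map_zero, zero_add] at h
    exact ⟨hr, (mul_eq_zero.mp h).resolve_right nodal_ne_zero⟩
  · rw [interpolate_eq_of_values_eq_on r 0 hr, map_zero, hQ, zero_mul, add_zero]

theorem eq_zero_of_sum_div_sub_add_eval_eq_zero (hv : Set.InjOn v s) {c : ι → F} {Q : F[X]}
    {m : ℕ} (hQ : Q.degree < m) {t : Finset F} (hcard : #s + m ≤ #t)
    (ht : ∀ x ∈ t, ∀ i ∈ s, x ≠ v i) (h : ∀ x ∈ t, ∑ i ∈ s, c i / (v i - x) + Q.eval x = 0) :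
    (∀ i ∈ s, c i = 0) ∧ Q = 0 := by
  -- chosen so that the barycentric form of `interpolate s v r` at `x` is
  -- `nodal s v * ∑ i ∈ s, c i / (v i - x)`
  set r : ι → F := fun i => -c i / nodalWeight s v i
  have hP : interpolate s v r + Q * nodal s v = 0 := by
    refine eq_zero_of_degree_lt_of_eval_finset_eq_zero t
      ((degree_interpolate_add_mul_nodal_lt hv r hQ).trans_le (by exact_mod_cast hcard))
      fun x hx => ?_
    have hterm : ∀ i ∈ s, nodalWeight s v i * (x - v i)⁻¹ * r i = c i / (v i - x) := by
      intro i hi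
      simp only [r]
      have hw := nodalWeight_ne_zero hv hi
      have hxv := sub_ne_zero.mpr (ht x hx i hi)
      rw [← neg_sub x]
      field_simp
    rw [eval_interpolate_add_mul_nodal r Q (ht x hx), sum_congr rfl hterm, h x hx, mul_zero]
  obtain ⟨hr, hQ⟩ := (interpolate_add_mul_nodal_eq_zero_iff hv).mp hP
  exact ⟨fun i hi => by simpa [r, nodalWeight_ne_zero hv hi] using hr i hi, hQ⟩

end Lagrange

section CauchyVandermonde

variable {F : Type*} [Field F] {L m : ℕ}

def cauchyVandermonde (f : Fin L → F) (α : Fin (L + m) → F) :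
    Matrix (Fin (L + m)) (Fin (L + m)) F :=
  Matrix.of fun n j => if h : (j : ℕ) < L then (f ⟨j, h⟩ - α n)⁻¹ else α n ^ ((j : ℕ) - L)

@[simp]
theorem cauchyVandermonde_apply_castAdd (f : Fin L → F) (α : Fin (L + m) → F) (n : Fin (L + m))
    (ℓ : Fin L) : cauchyVandermonde f α n (Fin.castAdd m ℓ) = (f ℓ - α n)⁻¹ := by
  simp [cauchyVandermonde]

@[simp]
theorem cauchyVandermonde_apply_natAdd (f : Fin L → F) (α : Fin (L + m) → F) (n : Fin (L + m))
    (k : Fin m) : cauchyVandermonde f α n (Fin.natAdd L k) = α n ^ (k : ℕ) := by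
  simp [cauchyVandermonde]

theorem cauchyVandermonde_mulVec_apply (f : Fin L → F) (α : Fin (L + m) → F)
    (c : Fin (L + m) → F) (n : Fin (L + m)) :
    (cauchyVandermonde f α *ᵥ c) n =
      ∑ ℓ, c (Fin.castAdd m ℓ) / (f ℓ - α n) +
        eval (α n) (∑ k : Fin m, C (c (Fin.natAdd L k)) * X ^ (k : ℕ)) := by
  rw [Matrix.mulVec, dotProduct, Fin.sum_univ_add, eval_finsetSum]
  congr 1 <;> refine sum_congr rfl fun _ _ => ?_
  · rw [cauchyVandermonde_apply_castAdd, div_eq_inv_mul]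
  · rw [cauchyVandermonde_apply_natAdd, eval_C_mul, eval_X_pow, mul_comm]

theorem cauchyVandermonde_det_ne_zero {f : Fin L → F} {α : Fin (L + m) → F}
    (hdist : Function.Injective (Sum.elim f α)) : (cauchyVandermonde f α).det ≠ 0 := by
  classical
  obtain ⟨hf, hα, hfα⟩ := Sum.elim_injective.mp hdist
  rw [Ne, ← Matrix.exists_mulVec_eq_zero_iff]
  rintro ⟨c, hc0, hc⟩
  obtain ⟨hcL, hQ⟩ := Lagrange.eq_zero_of_sum_div_sub_add_eval_eq_zero (s := univ) hf.injOn
    (c := fun ℓ => c (Fin.castAdd m ℓ)) (degree_sum_fin_lt fun k => c (Fin.natAdd L k))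
    (t := univ.image α) (by simp [card_image_of_injective _ hα])
    (by simpa using fun n ℓ => (hfα ℓ n).symm)
    (by simpa [← cauchyVandermonde_mulVec_apply] using congr_fun hc)
  refine hc0 (funext fun j => Fin.addCases (fun ℓ => hcL ℓ (mem_univ ℓ)) (fun k => ?_) j)
  simpa [finsetSum_coeff, coeff_C_mul_X_pow, Fin.val_inj] using congr_arg (coeff · k) hQ

end CauchyVandermonde

/-- **Invertibility of the square Cauchy–Vandermonde matrix.**
`F` is a field, `N = L + m`, and the `N + L` elements `f 0, …, f (L-1), α 0, …, α (N-1)`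
are pairwise distinct (encoded as injectivity of `Sum.elim f α`).  The `N × N` matrix whose
first `L` columns are Cauchy columns `(f ℓ - α n)⁻¹` and whose remaining `m` columns are
Vandermonde columns `α n ^ (k - 1)` is invertible (equivalently, its determinant is nonzero). -/
theorem cauchy_vandermonde_isUnit
    (F : Type*) [Field F] (L m : ℕ)
    (f : Fin L → F) (α : Fin (L + m) → F)
    (hdist : Function.Injective (Sum.elim f α)) :
    IsUnit (Matrix.of fun (n j : Fin (L + m)) =>
      if h : (j : ℕ) < L then (f ⟨j, h⟩ - α n)⁻¹ else α n ^ ((j : ℕ) - L)) ∧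
    (Matrix.of fun (n j : Fin (L + m)) =>
      if h : (j : ℕ) < L then (f ⟨j, h⟩ - α n)⁻¹ else α n ^ ((j : ℕ) - L)).det ≠ 0 := by
  have hdet : (cauchyVandermonde f α).det ≠ 0 := cauchyVandermonde_det_ne_zero hdist
  exact ⟨(Matrix.isUnit_iff_isUnit_det _).mpr hdet.isUnit, hdet⟩
end

section
/- Minimum-distance property of the CSA code: let F be a field, L, B positive naturals, N = L + 4B, and let f_1, …, f_L, α_1, …, α_N ∈ F be N + L pairwise distinct elements. Define φ : F^(L+2B) → F^N by φ(x)_n = Σ_{ℓ=1}^L x_ℓ·(f_ℓ − α_n)⁻¹ + Σ_{k=1}^{2B} x_{L+k}·α_n^{k−1}. Then for every nonzero x ∈ F^(L+2B), the vector φ(x) has at most L + 2B − 1 zero coordinates; equivalently, its Hamming weight is at least 2B + 1. -/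
/-!
Clearing denominators, `∏ ℓ (α - f ℓ) · φ(x)(α)` is the value at `α` of a polynomial `P` of
degree `< L + 2B`, so `φ(x)` vanishes at no more than `L + 2B - 1` of the `N = L + 4B` distinct
points `α n`. The polynomial `P` is nonzero for `x ≠ 0`: its value at the pole `f ℓ` is
`x ℓ` times a nonzero constant, so all the `x ℓ` vanish, and then `P` is the polynomial part
times `∏ ℓ (X - f ℓ)`.
-/

/-- The CSA (cross-subspace alignment) encoding map `φ : F^(L+2B) → F^N`, `N = L + 4B`:
`φ(x)_n = Σ_{ℓ} x_ℓ (f_ℓ - α_n)⁻¹ + Σ_{k} x_{L+k} α_n^(k-1)`. -/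
def csaEnc {F : Type*} [Field F] {L B : ℕ} (f : Fin L → F) (α : Fin (L + 4*B) → F)
    (x : Fin L ⊕ Fin (2*B) → F) (n : Fin (L + 4*B)) : F :=
  ∑ ℓ : Fin L, x (Sum.inl ℓ) * (f ℓ - α n)⁻¹ +
  ∑ k : Fin (2*B), x (Sum.inr k) * α n ^ (k : ℕ)

open Polynomial Finset Lagrange

namespace Polynomial

variable {R : Type*} [Semiring R] [DecidableEq R]

theorem eval_ofFn {n : ℕ} (v : Fin n → R) (a : R) :
    (ofFn n v).eval a = ∑ k : Fin n, v k * a ^ (k : ℕ) := by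
  simp only [ofFn_eq_sum_monomial, eval_finsetSum, eval_monomial]

end Polynomial

section CauchyNumerator

variable {F ι : Type*} [Field F] [Fintype ι] [DecidableEq ι]

noncomputable def cauchyNumerator (f c : ι → F) (g : F[X]) : F[X] :=
  g * nodal univ f - ∑ i, c i • nodal (univ.erase i) f

variable {f c : ι → F} {g : F[X]}

theorem eval_cauchyNumerator {a : F} (ha : ∀ i, f i ≠ a) :
    (cauchyNumerator f c g).eval a =
      (∑ i, c i * (f i - a)⁻¹ + g.eval a) * (nodal univ f).eval a := by
  have hpole (i : ι) : c i * (f i - a)⁻¹ * (nodal univ f).eval a =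
      -(c i * (nodal (univ.erase i) f).eval a) := by
    rw [nodal_eq_mul_nodal_erase (mem_univ i), eval_mul, eval_sub, eval_X, eval_C,
      ← neg_sub (f i)]
    field_simp [sub_ne_zero.2 (ha i)]
  simp only [cauchyNumerator, eval_sub, eval_mul, eval_finsetSum, eval_smul, smul_eq_mul,
    add_mul, sum_mul, hpole, sum_neg_distrib]
  ring

theorem eval_cauchyNumerator_node (i : ι) :
    (cauchyNumerator f c g).eval (f i) = -(c i * (nodal (univ.erase i) f).eval (f i)) := by
  have hother (j : ι) (hj : j ≠ i) : (nodal (univ.erase j) f).eval (f i) = 0 :=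
    eval_nodal_at_node (mem_erase.2 ⟨hj.symm, mem_univ i⟩)
  rw [cauchyNumerator, eval_sub, eval_mul, eval_nodal_at_node (mem_univ i), mul_zero, zero_sub,
    eval_finsetSum, sum_eq_single i (fun j _ hj => by rw [eval_smul, hother j hj, smul_zero])
      (fun h => absurd (mem_univ i) h), eval_smul, smul_eq_mul]

theorem cauchyNumerator_eq_zero_iff (hf : Function.Injective f) :
    cauchyNumerator f c g = 0 ↔ c = 0 ∧ g = 0 := by
  refine ⟨fun h => ?_, fun ⟨hc, hg⟩ => by simp [cauchyNumerator, hc, hg]⟩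
  have hc : c = 0 := funext fun i => by
    have hnode : (nodal (univ.erase i) f).eval (f i) ≠ 0 :=
      eval_nodal_not_at_node fun j hj => hf.ne (mem_erase.1 hj).1.symm
    have hzero := (eval_cauchyNumerator_node (c := c) (g := g) i).symm.trans
      (by rw [h, eval_zero])
    rw [neg_eq_zero, mul_eq_zero] at hzero
    exact hzero.resolve_right hnode
  refine ⟨hc, ?_⟩
  simpa [cauchyNumerator, hc, nodal_ne_zero] using h

theorem degree_cauchyNumerator_lt {m : ℕ} (hg : g.degree < m) :
    (cauchyNumerator f c g).degree < (Fintype.card ι + m : ℕ) := by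
  have hpoly : (g * nodal univ f).degree < (Fintype.card ι + m : ℕ) := by
    rw [degree_mul, degree_nodal, card_univ, Nat.cast_add, add_comm g.degree]
    exact WithBot.add_lt_add_left (WithBot.natCast_ne_bot _) hg
  have hpoles : (∑ i, c i • nodal (univ.erase i) f).degree < (Fintype.card ι + m : ℕ) := by
    refine (degree_sum_le _ _).trans_lt <|
      (Finset.sup_lt_iff (WithBot.bot_lt_coe _)).2 fun i _ => (degree_smul_le _ _).trans_lt ?_
    rw [degree_nodal, card_erase_of_mem (mem_univ i), card_univ, Nat.cast_lt]
    have := Fintype.card_pos_iff.2 ⟨i⟩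
    omega
  exact (degree_sub_le _ _).trans_lt (max_lt hpoly hpoles)

end CauchyNumerator

theorem card_filter_eval_eq_zero_le {R κ : Type*} [CommRing R] [IsDomain R] [DecidableEq R]
    [Fintype κ] {α : κ → R} (hα : Function.Injective α) {p : R[X]} (hp : p ≠ 0) :
    #{k | p.eval (α k) = 0} ≤ p.natDegree := by
  rw [← card_image_of_injective _ hα]
  refine card_le_degree_of_subset_roots fun a ha => ?_
  obtain ⟨k, hk, rfl⟩ := mem_image.1 ha
  exact (mem_roots hp).2 (mem_filter.1 hk).2

theorem csa_min_distance_general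
    (F : Type*) [Field F] [DecidableEq F] (L B : ℕ)
    (f : Fin L → F) (α : Fin (L + 4*B) → F)
    (hdist : Function.Injective (Sum.elim f α))
    (x : Fin L ⊕ Fin (2*B) → F) (hx : x ≠ 0) :
    2*B + 1 ≤ (Finset.univ.filter fun n : Fin (L + 4*B) => csaEnc f α x n ≠ 0).card := by
  obtain ⟨hf, hα, hfα⟩ := Sum.elim_injective.1 hdist
  set P := cauchyNumerator f (x ∘ Sum.inl) (ofFn (2*B) (x ∘ Sum.inr))
  have hP : P ≠ 0 := by
    rw [Ne, cauchyNumerator_eq_zero_iff hf, ← ofFn_zero, (injective_ofFn _).eq_iff]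
    exact fun ⟨hl, hr⟩ => hx (funext (Sum.rec (congrFun hl) (congrFun hr)))
  have hdeg : P.natDegree < L + 2*B := by
    have hlt :=
      degree_cauchyNumerator_lt (f := f) (c := x ∘ Sum.inl) (ofFn_degree_lt (x ∘ Sum.inr))
    rwa [Fintype.card_fin, ← natDegree_lt_iff_degree_lt hP] at hlt
  have hroot (n : Fin (L + 4*B)) (hn : csaEnc f α x n = 0) : P.eval (α n) = 0 := by
    rw [eval_cauchyNumerator (hfα · n), eval_ofFn]
    exact mul_eq_zero_of_left hn _
  have hzeros : #{n : Fin (L + 4*B) | csaEnc f α x n = 0} < L + 2*B :=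
    ((card_le_card (monotone_filter_right _ fun n _ => hroot n)).trans
      (card_filter_eval_eq_zero_le hα hP)).trans_lt hdeg
  have hsplit := card_filter_add_card_filter_not (s := univ) (fun n => csaEnc f α x n = 0)
  rw [card_univ, Fintype.card_fin] at hsplit
  simp only [ne_eq]
  omega

/-- **Minimum distance of the CSA code.**  If the `N + L` elements `f, α` are pairwise
distinct (`N = L + 4B`), then every nonzero `x ∈ F^(L+2B)` has codeword `csaEnc f α x` with
at most `L + 2B - 1` zero coordinates, equivalently with Hamming weight at least `2B + 1`. -/
theorem csa_min_distance
    (F : Type*) [Field F] [DecidableEq F] (L B : ℕ) (hL : 0 < L) (hB : 0 < B)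
    (f : Fin L → F) (α : Fin (L + 4*B) → F)
    (hdist : Function.Injective (Sum.elim f α))
    (x : Fin L ⊕ Fin (2*B) → F) (hx : x ≠ 0) :
    2*B + 1 ≤ (Finset.univ.filter fun n : Fin (L + 4*B) => csaEnc f α x n ≠ 0).card :=
  csa_min_distance_general F L B f α hdist x hx
end

section
/- Unique decodability against B Byzantine corruptions: let F be a field, L, B positive naturals, N = L + 4B, and let f_1, …, f_L, α_1, …, α_N ∈ F be N + L pairwise distinct elements. Define φ : F^(L+2B) → F^N by φ(x)_n = Σ_{ℓ=1}^L x_ℓ·(f_ℓ − α_n)⁻¹ + Σ_{k=1}^{2B} x_{L+k}·α_n^{k−1}. If x, x' ∈ F^(L+2B) and e, e' ∈ F^N each have at most B nonzero coordinates, and φ(x) + e = φ(x') + e', then x = x' and e = e'. -/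
open Polynomial Finset Lagrange Function

theorem hammingNorm_sub_le {ι : Type*} [Fintype ι] [DecidableEq ι] {β : ι → Type*}
    [∀ i, AddGroup (β i)] [∀ i, DecidableEq (β i)] (x y : ∀ i, β i) :
    hammingNorm (x - y) ≤ hammingNorm x + hammingNorm y := by
  refine (card_le_card fun i hi => ?_).trans (card_union_le _ _)
  simp only [mem_filter, mem_union, mem_univ, true_and] at hi ⊢
  by_contra! h
  exact hi (by rw [Pi.sub_apply, h.1, h.2, sub_zero])

theorem Polynomial.coeff_sum_fin_C_mul_X_pow {R : Type*} [Semiring R] {n : ℕ} (z : Fin n → R)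
    (k : Fin n) : (∑ i : Fin n, C (z i) * X ^ (i : ℕ)).coeff k = z k := by
  simp [Fin.val_inj]

section PartialFractions

variable {F ι : Type*} [Field F] [Fintype ι] [DecidableEq ι] {f y : ι → F} {Q : F[X]}

def partialFractionEval (f y : ι → F) (Q : F[X]) (a : F) : F :=
  ∑ ℓ, y ℓ * (f ℓ - a)⁻¹ + Q.eval a

noncomputable def partialFractionNumerator (f y : ι → F) (Q : F[X]) : F[X] :=
  Q * nodal univ f - ∑ ℓ, y ℓ • nodal (univ.erase ℓ) f

theorem eval_partialFractionNumerator {a : F} (ha : ∀ ℓ, f ℓ ≠ a) :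
    (partialFractionNumerator f y Q).eval a =
      partialFractionEval f y Q a * (nodal univ f).eval a := by
  have hterm (ℓ : ι) :
      (f ℓ - a)⁻¹ * (nodal univ f).eval a = -(nodal (univ.erase ℓ) f).eval a := by
    rw [nodal_eq_mul_nodal_erase (mem_univ ℓ), eval_mul, ← mul_assoc, eval_sub, eval_X, eval_C,
      ← neg_sub, inv_neg, neg_mul, inv_mul_cancel₀ (sub_ne_zero.mpr (ha ℓ).symm), neg_one_mul]
  simp only [partialFractionNumerator, partialFractionEval, eval_sub, eval_mul, eval_finsetSum,
    eval_smul, smul_eq_mul, add_mul, sum_mul, mul_assoc, hterm, mul_neg, sum_neg_distrib]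
  ring

theorem eval_partialFractionNumerator_node (ℓ : ι) :
    (partialFractionNumerator f y Q).eval (f ℓ) =
      -(y ℓ * (nodal (univ.erase ℓ) f).eval (f ℓ)) := by
  simp only [partialFractionNumerator, eval_sub, eval_mul, eval_nodal_at_node (mem_univ ℓ),
    mul_zero, zero_sub, eval_finsetSum, eval_smul, smul_eq_mul]
  rw [sum_eq_single ℓ (fun j _ hj => by
    rw [eval_nodal_at_node (mem_erase.mpr ⟨Ne.symm hj, mem_univ ℓ⟩), mul_zero]) (by simp)]

theorem degree_partialFractionNumerator_lt {M : ℕ} (hQ : Q.degree < M) :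
    (partialFractionNumerator f y Q).degree < ↑(Fintype.card ι + M) := by
  refine (degree_sub_le _ _).trans_lt (max_lt ?_ ?_)
  · rw [degree_mul, degree_nodal, card_univ, Nat.cast_add, add_comm (Fintype.card ι : WithBot ℕ)]
    exact WithBot.add_lt_add_right (WithBot.natCast_ne_bot _) hQ
  · refine (degree_sum_le _ _).trans_lt ((Finset.sup_lt_iff (WithBot.bot_lt_coe _)).mpr ?_)
    intro ℓ _
    have : 0 < Fintype.card ι := Fintype.card_pos_iff.mpr ⟨ℓ⟩
    refine (degree_smul_le _ _).trans_lt ?_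
    rw [degree_nodal, card_erase_of_mem (mem_univ ℓ), card_univ]
    norm_cast
    omega

theorem eq_zero_of_partialFractionEval_eq_zero (hf : Injective f) {M : ℕ} (hQ : Q.degree < M)
    {S : Finset F} (hSf : ∀ a ∈ S, ∀ ℓ, f ℓ ≠ a) (hS : Fintype.card ι + M ≤ #S)
    (hzero : ∀ a ∈ S, partialFractionEval f y Q a = 0) : y = 0 ∧ Q = 0 := by
  have hP : partialFractionNumerator f y Q = 0 :=
    eq_zero_of_degree_lt_of_eval_finset_eq_zero S
      ((degree_partialFractionNumerator_lt hQ).trans_le (by exact_mod_cast hS)) fun a ha => by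
        rw [eval_partialFractionNumerator (hSf a ha), hzero a ha, zero_mul]
  have hy : y = 0 := by
    funext ℓ
    have h := congrArg (Polynomial.eval (f ℓ)) hP
    rw [eval_partialFractionNumerator_node, eval_zero, neg_eq_zero] at h
    exact (mul_eq_zero.mp h).resolve_right <| eval_nodal_not_at_node fun j hj =>
      hf.ne (mem_erase.mp hj).1.symm
  have hQN : Q * nodal univ f = 0 := by simpa [partialFractionNumerator, hy] using hP
  exact ⟨hy, (mul_eq_zero.mp hQN).resolve_right nodal_ne_zero⟩

end PartialFractions

section CSA

variable {F : Type*} [Field F] {L B : ℕ} {f : Fin L → F} {α : Fin (L + 4*B) → F}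

theorem csaEnc_sub (x x' : Fin L ⊕ Fin (2*B) → F) :
    csaEnc f α (x - x') = csaEnc f α x - csaEnc f α x' := by
  funext n
  simp only [csaEnc, Pi.sub_apply, sub_mul, sum_sub_distrib]
  ring

theorem csaEnc_apply_eq_partialFractionEval (x : Fin L ⊕ Fin (2*B) → F) (n : Fin (L + 4*B)) :
    csaEnc f α x n = partialFractionEval f (x ∘ Sum.inl)
      (∑ k : Fin (2*B), C (x (Sum.inr k)) * X ^ (k : ℕ)) (α n) := by
  simp [csaEnc, partialFractionEval, eval_finsetSum]

theorem eq_zero_of_hammingNorm_csaEnc_le [DecidableEq F] (hdist : Injective (Sum.elim f α))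
    {y : Fin L ⊕ Fin (2*B) → F} (hy : hammingNorm (csaEnc f α y) ≤ 2 * B) : y = 0 := by
  set Z := univ.filter fun n => csaEnc f α y n = 0 with hZdef
  have hZ : L + 2*B ≤ #(Z.image α) := by
    have := card_filter_add_card_filter_not (s := univ) (p := fun n => csaEnc f α y n = 0)
    rw [card_univ, Fintype.card_fin, ← hZdef] at this
    simp only [hammingNorm, ne_eq] at hy
    have hα : Injective α := hdist.comp Sum.inr_injective
    rw [card_image_of_injective Z hα]
    omega
  have hfα : ∀ a ∈ Z.image α, ∀ ℓ, f ℓ ≠ a := by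
    simp only [mem_image]
    rintro _ ⟨n, -, rfl⟩ ℓ h
    exact Sum.inl_ne_inr (hdist h)
  have hzero : ∀ a ∈ Z.image α, partialFractionEval f (y ∘ Sum.inl)
      (∑ k : Fin (2*B), C (y (Sum.inr k)) * X ^ (k : ℕ)) a = 0 := by
    simp only [mem_image]
    rintro _ ⟨n, hn, rfl⟩
    rw [← csaEnc_apply_eq_partialFractionEval]
    exact (mem_filter.mp hn).2
  obtain ⟨hl, hr⟩ := eq_zero_of_partialFractionEval_eq_zero (hdist.comp Sum.inl_injective)
    (degree_sum_fin_lt _) hfα (by rwa [Fintype.card_fin]) hzero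
  ext (ℓ | k)
  · exact congrFun hl ℓ
  · simpa only [coeff_sum_fin_C_mul_X_pow, coeff_zero, Pi.zero_apply]
      using congrArg (coeff · k) hr

end CSA

theorem csa_unique_decoding_general
    (F : Type*) [Field F] [DecidableEq F] (L B : ℕ)
    (f : Fin L → F) (α : Fin (L + 4*B) → F)
    (hdist : Function.Injective (Sum.elim f α))
    (x x' : Fin L ⊕ Fin (2*B) → F) (e e' : Fin (L + 4*B) → F)
    (he : (Finset.univ.filter fun n => e n ≠ 0).card ≤ B)
    (he' : (Finset.univ.filter fun n => e' n ≠ 0).card ≤ B)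
    (heq : csaEnc f α x + e = csaEnc f α x' + e') :
    x = x' ∧ e = e' := by
  have hdiff : csaEnc f α (x - x') = e' - e := by
    rw [csaEnc_sub]
    exact sub_eq_sub_iff_add_eq_add.mpr (heq.trans (add_comm _ _))
  have hx : x = x' := sub_eq_zero.mp <| eq_zero_of_hammingNorm_csaEnc_le hdist <| by
    rw [hdiff, two_mul]
    exact (hammingNorm_sub_le e' e).trans (add_le_add he' he)
  subst hx
  exact ⟨rfl, add_left_cancel heq⟩

/-- **Unique decodability against `B` Byzantine corruptions.**  With `N = L + 4B` and the
`N + L` evaluation points pairwise distinct, if two codewords are corrupted by error vectors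
supported on at most `B` coordinates each and the corrupted words agree, then the data and
the error vectors agree. -/
theorem csa_unique_decoding
    (F : Type*) [Field F] [DecidableEq F] (L B : ℕ) (hL : 0 < L) (hB : 0 < B)
    (f : Fin L → F) (α : Fin (L + 4*B) → F)
    (hdist : Function.Injective (Sum.elim f α))
    (x x' : Fin L ⊕ Fin (2*B) → F) (e e' : Fin (L + 4*B) → F)
    (he : (Finset.univ.filter fun n => e n ≠ 0).card ≤ B)
    (he' : (Finset.univ.filter fun n => e' n ≠ 0).card ≤ B)
    (heq : csaEnc f α x + e = csaEnc f α x' + e') :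
    x = x' ∧ e = e' :=
  csa_unique_decoding_general F L B f α hdist x x' e e' he he' heq
end

section
/- Surjectivity of the Vandermonde-plus-projection map: let F be a field, B a positive natural number, and let α_1, …, α_N ∈ F be pairwise distinct. For any subset S ⊆ [N] with |S| ≤ B, the linear map F^(2B) → F^S × F^B sending z = (z_1, …, z_{2B}) to ((Σ_{i=1}^{2B} α_n^{i−1} z_i)_{n∈S}, (z_{B+1}, …, z_{2B})) is surjective. -/
/-!
Split `z` into its low half `y` and its high half `w`. The high half is the projection, so it is
forced; the mask at node `α n` is then `p(α n) + Σ_j α_n^(B+j) w_j`, where `p` is the polynomial of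
degree `< B` with coefficient vector `y`. Since there are at most `B` distinct nodes, Lagrange
interpolation finds `p` taking any prescribed values at them.
-/

open Polynomial

theorem Polynomial.eval_eq_sum_fin {R : Type*} [CommSemiring R] {p : R[X]} {m : ℕ}
    (hp : p.degree < m) (x : R) : p.eval x = ∑ k : Fin m, x ^ (k : ℕ) * p.coeff k := by
  rw [eval_eq_sum, ← sum_fin (fun e a => a * x ^ e) (fun _ => zero_mul _) hp]
  exact Finset.sum_congr rfl fun k _ => mul_comm _ _

theorem Lagrange.exists_sum_pow_mul_eq {F ι : Type*} [Field F] [DecidableEq ι]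
    {s : Finset ι} {v : ι → F} (hv : Set.InjOn v s) {m : ℕ} (hs : s.card ≤ m) (r : ι → F) :
    ∃ y : Fin m → F, ∀ i ∈ s, ∑ k : Fin m, v i ^ (k : ℕ) * y k = r i := by
  have hdeg : (Lagrange.interpolate s v r).degree < m :=
    (Lagrange.degree_interpolate_lt r hv).trans_le (by exact_mod_cast hs)
  refine ⟨fun k => (Lagrange.interpolate s v r).coeff k, fun i hi => ?_⟩
  rw [← eval_eq_sum_fin hdeg, Lagrange.eval_interpolate_at_node r hv hi]

theorem Fin.sum_pow_mul_append {R : Type*} [CommSemiring R] {m n : ℕ} (x : R)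
    (y : Fin m → R) (w : Fin n → R) :
    ∑ i : Fin (m + n), x ^ (i : ℕ) * Fin.append y w i
      = ∑ k : Fin m, x ^ (k : ℕ) * y k + ∑ j : Fin n, x ^ (m + (j : ℕ)) * w j := by
  simp [Fin.sum_univ_add]

/-- **Surjectivity of the Vandermonde-plus-projection map.**  For pairwise distinct
`α 0, …, α (N-1)` and any `S ⊆ [N]` with `|S| ≤ B`, the linear map `F^(2B) → F^S × F^B`
sending `z` to the masks `(Σ_i α_n^(i-1) z_i)_{n ∈ S}` together with the last `B`
coordinates `(z_{B+1}, …, z_{2B})` of `z`, is surjective. -/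
theorem vandermonde_plus_projection_surjective
    (F : Type*) [Field F] (B N : ℕ)
    (α : Fin N → F) (hα : Function.Injective α)
    (S : Finset (Fin N)) (hS : S.card ≤ B) :
    Function.Surjective (fun z : Fin (2*B) → F =>
      ((fun n : S => ∑ i : Fin (2*B), α n ^ (i : ℕ) * z i),
       (fun j : Fin B => z ⟨B + (j : ℕ), by have := j.isLt; omega⟩))) := by
  rintro ⟨c, w⟩
  obtain ⟨y, hy⟩ := Lagrange.exists_sum_pow_mul_eq hα.injOn hS fun n =>
    (if h : n ∈ S then c ⟨n, h⟩ else 0) - ∑ j : Fin B, α n ^ (B + (j : ℕ)) * w j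
  refine ⟨fun i => Fin.append y w (Fin.cast (two_mul B) i), Prod.ext ?_ ?_⟩
  · funext n
    calc ∑ i : Fin (2 * B), α n ^ (i : ℕ) * Fin.append y w (Fin.cast (two_mul B) i)
        = ∑ i : Fin (B + B), α n ^ (i : ℕ) * Fin.append y w i :=
          Fin.sum_congr' (fun i => α n ^ (i : ℕ) * Fin.append y w i) (two_mul B)
      _ = ∑ k : Fin B, α n ^ (k : ℕ) * y k + ∑ j : Fin B, α n ^ (B + (j : ℕ)) * w j :=
          Fin.sum_pow_mul_append _ y w
      _ = c n := by simp [hy n n.2]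
  · funext j
    exact Fin.append_right y w j
end
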